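/- For a, b, c ∈ ℂ with c not a nonpositive integer, and for complex x with |x| < 1/2, the Pfaff transformation holds: ₂F₁(a, b; c; x) = (1−x)^{−a} · ₂F₁(a, c−b; c; x/(x−1)). -/

import Mathlib

/-!
Write `Tₖ = (a)ₖ (c - b)ₖ / ((c)ₖ k!)`. As `(x / (x - 1))ᵏ = (-x)ᵏ (1 - x)⁻ᵏ`, the right-hand
side is `∑ₖ Tₖ (-x)ᵏ (1 - x) ^ (-a - k)`; expanding each `(1 - x) ^ (-a - k)` by the binomial
series `∑ₙ (a + k)ₙ / n! xⁿ` turns it into a double series. For `‖x‖ < 1/2` this converges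
absolutely, so it may be summed along the diagonals `k + n = m` instead. Since
`(a)ₖ (a + k)ₙ = (a)ₘ`, the coefficient of `xᵐ` is `(a)ₘ / ((c)ₘ m!)` times the Chu–Vandermonde
sum `∑ₖ (-1)ᵏ C(m, k) (c - b)ₖ (c + k)ₘ₋ₖ = (b)ₘ`.
-/

/-- The Pochhammer symbol `(a)_n = a(a+1)⋯(a+n-1)`. -/
noncomputable def poch (a : ℂ) (n : ℕ) : ℂ := Polynomial.eval a (ascPochhammer ℂ n)

/-- `z` is not a nonpositive integer. -/
def NotNonposInt (z : ℂ) : Prop := ∀ m : ℕ, z ≠ -(m : ℂ)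

/-- The Gauss hypergeometric series `₂F₁(a,b;c;x)`. -/
noncomputable def twoF1 (a b c x : ℂ) : ℂ :=
  ∑' k : ℕ, poch a k * poch b k / (poch c k * (Nat.factorial k)) * x ^ k

open Finset Polynomial
open scoped Nat

theorem Summable.tsum_eq_tsum_sum_antidiagonal {A α : Type*} [AddCommMonoid A]
    [HasAntidiagonal A] [AddCommMonoid α] [TopologicalSpace α] [ContinuousAdd α] [T3Space α]
    {f : A × A → α} (hf : Summable f) : ∑' p, f p = ∑' n, ∑ kl ∈ antidiagonal n, f kl := by
  conv_rhs =>
    congr; ext; rw [← Finset.sum_finset_coe, ← tsum_fintype (L := .unconditional _)]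
  rw [← HasAntidiagonal.sigmaAntidiagonalEquivProd.tsum_eq f]
  exact Summable.tsum_sigma' (fun n => (hasSum_fintype _).summable)
    (HasAntidiagonal.sigmaAntidiagonalEquivProd.summable_iff.mpr hf)

theorem Ring.choose_add_natCast_sub_one {K : Type*} [Field K] [CharZero K] (a : K) (n : ℕ) :
    Ring.choose (a + n - 1) n = (ascPochhammer K n).eval a / n ! := by
  rw [← Ring.multichoose_eq, eq_div_iff (Nat.cast_ne_zero.mpr n.factorial_ne_zero), mul_comm,
    ← nsmul_eq_mul, Ring.factorial_nsmul_multichoose_eq_ascPochhammer,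
    ascPochhammer_smeval_eq_eval]

theorem ascPochhammer_eval_nonneg {S : Type*} [Semiring S] [PartialOrder S] [IsOrderedRing S]
    {s : S} (h : 0 ≤ s) (n : ℕ) : 0 ≤ (ascPochhammer S n).eval s := by
  induction n with
  | zero => simp
  | succ n ih => rw [ascPochhammer_succ_eval]; positivity

theorem one_le_radius_ordinaryHypergeometricSeries {𝕂 : Type*} (𝔸 : Type*) [RCLike 𝕂]
    [NormedDivisionRing 𝔸] [NormedAlgebra 𝕂 𝔸] (a b : 𝕂) {c : 𝕂} (hc : ∀ k : ℕ, c ≠ -k) :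
    1 ≤ (ordinaryHypergeometricSeries 𝔸 a b c).radius := by
  by_cases ha : ∃ k : ℕ, a = -k
  · obtain ⟨k, rfl⟩ := ha
    simp [ordinaryHypergeometric_radius_top_of_neg_nat₁]
  by_cases hb : ∃ k : ℕ, b = -k
  · obtain ⟨k, rfl⟩ := hb
    simp [ordinaryHypergeometric_radius_top_of_neg_nat₂]
  push Not at ha hb
  refine (ordinaryHypergeometricSeries_radius_eq_one 𝔸 a b c fun k => ?_).ge
  exact ⟨fun h => ha k (neg_eq_iff_eq_neg.mp h.symm),
    fun h => hb k (neg_eq_iff_eq_neg.mp h.symm), fun h => hc k (neg_eq_iff_eq_neg.mp h.symm)⟩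

theorem poch_add (a : ℂ) (k n : ℕ) : poch a (k + n) = poch a k * poch (a + k) n := by
  simpa [poch, eval_comp] using (congrArg (eval a) (ascPochhammer_mul ℂ k n)).symm

theorem poch_ne_zero {c : ℂ} (hc : NotNonposInt c) (n : ℕ) : poch c n ≠ 0 := by
  intro h
  obtain ⟨k, -, hk⟩ := (ascPochhammer_eval_eq_zero_iff n c).mp h
  exact hc k (by rw [hk, neg_neg])

theorem poch_neg_sub_add_one (d : ℂ) (n : ℕ) : poch (-d - n + 1) n = (-1) ^ n * poch d n := by
  have := ascPochhammer_eval_neg_eq_descPochhammer ℂ (d + n - 1) n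
  rwa [descPochhammer_eval_eq_ascPochhammer, show d + n - 1 - n + 1 = d by ring,
    show -(d + n - 1) = -d - n + 1 by ring] at this

theorem descPochhammer_smeval_eq_poch (r : ℂ) (n : ℕ) :
    (descPochhammer ℤ n).smeval r = poch (r - n + 1) n := by
  rw [descPochhammer_smeval_eq_ascPochhammer, ascPochhammer_smeval_eq_eval, poch]

-- Chu–Vandermonde for falling factorials, evaluated at `-d` and `c + m - 1`.
theorem sum_antidiagonal_choose_mul_poch (c d : ℂ) (m : ℕ) :
    ∑ p ∈ antidiagonal m, (m.choose p.1 : ℂ) * ((-1) ^ p.1 * poch d p.1) * poch (c + p.1) p.2 =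
      poch (c - d) m := by
  have := Ring.descPochhammer_smeval_add m (Commute.all (-d) (c + m - 1))
  simp only [descPochhammer_smeval_eq_poch] at this
  rw [show -d + (c + m - 1) - m + 1 = c - d by ring] at this
  rw [this]
  refine sum_congr rfl fun p hp => ?_
  rw [HasAntidiagonal.mem_antidiagonal] at hp
  rw [mul_assoc, ← poch_neg_sub_add_one, ← hp]
  push_cast
  ring_nf

theorem norm_poch_le {s : ℂ} {r : ℝ} (h : ‖s‖ ≤ r) (n : ℕ) :
    ‖poch s n‖ ≤ (ascPochhammer ℝ n).eval r := by
  induction n with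
  | zero => simp [poch]
  | succ n ih =>
    simp only [poch, ascPochhammer_succ_eval, norm_mul] at ih ⊢
    have hsn : ‖s + n‖ ≤ r + n := (norm_add_le _ _).trans (by simpa using h)
    exact mul_le_mul ih hsn (norm_nonneg _) ((norm_nonneg _).trans ih)

theorem hasSum_poch_div_factorial_mul_pow (s : ℂ) {x : ℂ} (hx : ‖x‖ < 1) :
    HasSum (fun n => poch s n / n ! * x ^ n) ((1 - x) ^ (-s)) := by
  have := (Complex.one_div_one_sub_cpow_hasFPowerSeriesOnBall_zero s).hasSum (y := x)
    (by rw [← ENNReal.ofReal_one, Metric.eball_ofReal]; simpa using hx)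
  simpa [FormalMultilinearSeries.ofScalars_apply_eq, Ring.choose_add_natCast_sub_one, poch,
    Complex.cpow_neg, mul_comm] using this

theorem Real.hasSum_ascPochhammer_eval_div_factorial_mul_pow (β : ℝ) {t : ℝ} (ht : |t| < 1) :
    HasSum (fun n => (ascPochhammer ℝ n).eval β / n ! * t ^ n) ((1 - t) ^ (-β)) := by
  have := (Real.one_div_one_sub_rpow_hasFPowerSeriesOnBall_zero β).hasSum (y := t)
    (by rw [← ENNReal.ofReal_one, Metric.eball_ofReal]; simpa using ht)
  have h1t : 0 ≤ 1 - t := by linarith [le_abs_self t]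
  simpa [FormalMultilinearSeries.ofScalars_apply_eq, Ring.choose_add_natCast_sub_one,
    Real.rpow_neg h1t, mul_comm] using this

noncomputable def twoF1Coeff (a b c : ℂ) (k : ℕ) : ℂ := poch a k * poch b k / (poch c k * k !)

theorem summable_norm_twoF1Coeff_mul_pow (a b : ℂ) {c : ℂ} (hc : NotNonposInt c) {r : ℝ}
    (hr0 : 0 ≤ r) (hr1 : r < 1) : Summable fun k => ‖twoF1Coeff a b c k‖ * r ^ k := by
  have hr : (r : ℂ) ∈ Metric.eball 0 (ordinaryHypergeometricSeries ℂ a b c).radius := by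
    refine Metric.eball_subset_eball (one_le_radius_ordinaryHypergeometricSeries ℂ a b hc) ?_
    rw [← ENNReal.ofReal_one, Metric.eball_ofReal]
    simpa [abs_of_nonneg hr0] using hr1
  refine ((ordinaryHypergeometricSeries ℂ a b c).summable_norm_apply hr).congr fun k => ?_
  rw [ordinaryHypergeometricSeries_apply_eq, smul_eq_mul, norm_mul, norm_pow, Complex.norm_real,
    Real.norm_of_nonneg hr0, twoF1Coeff, poch, poch, poch]
  congr 2
  ring

/-- The `(k, n)` term of `(1 - x) ^ (-a) ₂F₁(a, c - b; c; x / (x - 1))` once the factor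
`(1 - x) ^ (-a - k)` of its `k`-th term is expanded by the binomial series. -/
noncomputable def pfaffTerm (a b c x : ℂ) (p : ℕ × ℕ) : ℂ :=
  twoF1Coeff a (c - b) c p.1 * (-x) ^ p.1 * (poch (a + p.1) p.2 / p.2 ! * x ^ p.2)

theorem hasSum_pfaffTerm_row (a b c : ℂ) {x : ℂ} (hx : ‖x‖ < 1) (k : ℕ) :
    HasSum (fun n => pfaffTerm a b c x (k, n))
      ((1 - x) ^ (-a) * (twoF1Coeff a (c - b) c k * (x / (x - 1)) ^ k)) := by
  have h1x : 1 - x ≠ 0 := by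
    intro h
    simp [show x = 1 by linear_combination -h] at hx
  have hpow : (1 - x) ^ (-(a + k)) = (1 - x) ^ (-a) / (1 - x) ^ k := by
    rw [neg_add, ← sub_eq_add_neg, Complex.cpow_sub _ _ h1x, Complex.cpow_natCast]
  have hval : (1 - x) ^ (-a) * (twoF1Coeff a (c - b) c k * (x / (x - 1)) ^ k) =
      twoF1Coeff a (c - b) c k * (-x) ^ k * (1 - x) ^ (-(a + k)) := by
    rw [hpow, show x - 1 = -(1 - x) by ring, div_neg, ← neg_div, div_pow]
    ring
  rw [hval]
  exact (hasSum_poch_div_factorial_mul_pow (a + k) hx).mul_left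
    (twoF1Coeff a (c - b) c k * (-x) ^ k)

theorem sum_antidiagonal_pfaffTerm (a b : ℂ) {c : ℂ} (hc : NotNonposInt c) (x : ℂ) (m : ℕ) :
    ∑ p ∈ antidiagonal m, pfaffTerm a b c x p = twoF1Coeff a b c m * x ^ m := by
  have hterm : ∀ p ∈ antidiagonal m, pfaffTerm a b c x p =
      poch a m / (poch c m * m !) * x ^ m *
        ((m.choose p.1 : ℂ) * ((-1) ^ p.1 * poch (c - b) p.1) * poch (c + p.1) p.2) := by
    rintro ⟨k, n⟩ hp
    rw [HasAntidiagonal.mem_antidiagonal] at hp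
    subst hp
    have hckn := poch_ne_zero hc (k + n)
    rw [poch_add c k n] at hckn ⊢
    have hcn := right_ne_zero_of_mul hckn
    have hfac := Nat.cast_ne_zero (R := ℂ) |>.mpr (k + n).factorial_ne_zero
    rw [pfaffTerm, twoF1Coeff, poch_add a, Nat.cast_choose ℂ (Nat.le_add_right k n),
      add_tsub_cancel_left, pow_add, neg_pow]
    field_simp
  rw [sum_congr rfl hterm, ← mul_sum, sum_antidiagonal_choose_mul_poch, sub_sub_cancel,
    twoF1Coeff]
  ring

theorem norm_pfaffTerm_le (a b c x : ℂ) (p : ℕ × ℕ) :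
    ‖pfaffTerm a b c x p‖ ≤ ‖twoF1Coeff a (c - b) c p.1‖ * ‖x‖ ^ p.1 *
      ((ascPochhammer ℝ p.2).eval (‖a‖ + p.1) / p.2 ! * ‖x‖ ^ p.2) := by
  simp only [pfaffTerm, norm_mul, norm_div, norm_pow, norm_neg, Complex.norm_natCast]
  gcongr
  exact norm_poch_le ((norm_add_le _ _).trans (by simp)) p.2

-- With `t = ‖x‖`, the `k`-th row of the majorant sums to `(1 - t) ^ (-‖a‖) ‖Tₖ‖ (t / (1 - t))ᵏ`,
-- and `t / (1 - t) < 1` is exactly `t < 1/2`.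
theorem summable_pfaffTerm (a b : ℂ) {c : ℂ} (hc : NotNonposInt c) {x : ℂ} (hx : ‖x‖ < 1 / 2) :
    Summable (pfaffTerm a b c x) := by
  set t := ‖x‖
  have ht : |t| < 1 := by rw [abs_of_nonneg (norm_nonneg x)]; linarith
  have h1t : 0 < 1 - t := by linarith
  have hrow (k : ℕ) :=
    (Real.hasSum_ascPochhammer_eval_div_factorial_mul_pow (‖a‖ + k) ht).mul_left
      (‖twoF1Coeff a (c - b) c k‖ * t ^ k)
  refine Summable.of_norm_bounded ?_ (norm_pfaffTerm_le a b c x)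
  refine (summable_prod_of_nonneg fun p => ?_).mpr ⟨fun k => (hrow k).summable, ?_⟩
  · have := ascPochhammer_eval_nonneg (by positivity : 0 ≤ ‖a‖ + p.1) p.2
    dsimp only
    positivity
  have hw : t / (1 - t) < 1 := by rw [div_lt_one h1t]; linarith
  refine ((summable_norm_twoF1Coeff_mul_pow a (c - b) hc (by positivity) hw).mul_left
    ((1 - t) ^ (-‖a‖))).congr fun k => ?_
  rw [(hrow k).tsum_eq, neg_add, Real.rpow_add h1t, Real.rpow_neg h1t.le (k : ℝ),
    Real.rpow_natCast, div_pow]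
  field_simp

theorem pfaff_transform (a b c : ℂ) (hc : NotNonposInt c) (x : ℂ) (hx : ‖x‖ < 1 / 2) :
    twoF1 a b c x = (1 - x) ^ (-a) * twoF1 a (c - b) c (x / (x - 1)) := by
  have hx1 : ‖x‖ < 1 := by linarith
  have hF := summable_pfaffTerm a b hc hx
  calc twoF1 a b c x = ∑' m, ∑ p ∈ antidiagonal m, pfaffTerm a b c x p :=
        tsum_congr fun m => (sum_antidiagonal_pfaffTerm a b hc x m).symm
    _ = ∑' k, ∑' n, pfaffTerm a b c x (k, n) := by
        rw [← hF.tsum_eq_tsum_sum_antidiagonal,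
          hF.tsum_prod' fun k => (hasSum_pfaffTerm_row a b c hx1 k).summable]
    _ = ∑' k, (1 - x) ^ (-a) * (twoF1Coeff a (c - b) c k * (x / (x - 1)) ^ k) :=
        tsum_congr fun k => (hasSum_pfaffTerm_row a b c hx1 k).tsum_eq
    _ = (1 - x) ^ (-a) * twoF1 a (c - b) c (x / (x - 1)) := tsum_mul_left
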